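/- arXiv:1003.5077 — 4 statements merged into one kernel-verified Lean document; each statement's English description precedes it below -/
import Mathlib

section
/- Let n ≥ 1, let q be a nondegenerate quadratic form on ℝ^{n-1}, let g(y,z) = q(y) + z² and h(y,z) = q(y) + z on ℝ^{n-1} × ℝ. Let A be a linear endomorphism of ℝ^{n-1} × ℝ whose z-component vanishes on the hyperplane {z = 0}, and suppose the function x ↦ Dg(x)[Ax] is negative for every x ≠ 0. Then for every (y,z) ≠ (0,0) with 0 ≤ z < 1/2, one has Dh(y,z)[A(y,z)] < 0. -/
/-!
Write `c` for the `z`-component of `A (0, 1)`. Since `A` maps the hyperplane `{z = 0}` into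
itself, the `z`-component of `A (y, z)` is `z c`, and testing the hypothesis at `(0, 1)`,
where `Dq` vanishes, gives `2c < 0`. With `P = Dq(y)[(A x).1]` one has `Dg(x)[Ax] = P + 2z²c` and
`Dh(x)[Ax] = P + zc`, so `Dh(x)[Ax] = Dg(x)[Ax] + zc(1 - 2z)`, and the last term is `≤ 0`
for `0 ≤ z ≤ 1/2`.
-/

namespace QuadraticMap

variable {𝕜 E F : Type*} [NontriviallyNormedField 𝕜] [CompleteSpace 𝕜] [Invertible (2 : 𝕜)]
  [NormedAddCommGroup E] [NormedSpace 𝕜 E] [FiniteDimensional 𝕜 E]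
  [NormedAddCommGroup F] [NormedSpace 𝕜 F]

theorem differentiable (q : QuadraticMap 𝕜 E F) : Differentiable 𝕜 q := by
  have hq : ⇑q = fun x => (associated q).toContinuousBilinearMap x x := by
    ext x
    simp [associated_eq_self_apply]
  rw [hq]
  fun_prop

theorem fderiv_apply (q : QuadraticMap 𝕜 E F) (x v : E) : fderiv 𝕜 q x v = polar q x v := by
  rw [← (q.differentiable x).lineDeriv_eq_fderiv, QuadraticMap.lineDeriv]

end QuadraticMap

theorem fderiv_fst_add_snd_apply {E : Type*} [NormedAddCommGroup E] [NormedSpace ℝ E]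
    {φ : E → ℝ} {ψ : ℝ → ℝ} {x : E × ℝ} (hφ : DifferentiableAt ℝ φ x.1)
    (hψ : DifferentiableAt ℝ ψ x.2) (v : E × ℝ) :
    fderiv ℝ (fun p : E × ℝ => φ p.1 + ψ p.2) x v = fderiv ℝ φ x.1 v.1 + deriv ψ x.2 * v.2 := by
  have hfst : HasFDerivAt (fun p : E × ℝ => φ p.1)
      ((fderiv ℝ φ x.1).comp (ContinuousLinearMap.fst ℝ E ℝ)) x :=
    hφ.hasFDerivAt.comp x hasFDerivAt_fst
  have hsnd := hψ.hasDerivAt.comp_hasFDerivAt x (hasFDerivAt_snd (𝕜 := ℝ))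
  have hsum : HasFDerivAt (fun p : E × ℝ => φ p.1 + ψ p.2) _ x := hfst.add hsnd
  rw [hsum.fderiv]
  simp [mul_comm]

theorem LinearMap.snd_apply_eq_smul_of_snd_apply_inl {R M N : Type*} [CommSemiring R]
    [AddCommMonoid M] [Module R M] [AddCommMonoid N] [Module R N] (A : M × R →ₗ[R] M × N)
    (hA : ∀ y : M, (A (y, 0)).2 = 0) (x : M × R) : (A x).2 = x.2 • (A (0, 1)).2 := by
  have hx : x = (x.1, 0) + x.2 • ((0 : M), (1 : R)) := by ext <;> simp
  conv_lhs => rw [hx, map_add, map_smul]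
  simp [hA]

theorem pseudo_gradient_easy_calculation_general (n : ℕ)
    (q : QuadraticForm ℝ (Fin (n - 1) → ℝ))
    (A : ((Fin (n - 1) → ℝ) × ℝ) →ₗ[ℝ] ((Fin (n - 1) → ℝ) × ℝ))
    (hA : ∀ y : Fin (n - 1) → ℝ, (A (y, 0)).2 = 0)
    (hneg : ∀ x : (Fin (n - 1) → ℝ) × ℝ, x ≠ 0 →
      fderiv ℝ (fun p : (Fin (n - 1) → ℝ) × ℝ => q p.1 + p.2 ^ 2) x (A x) < 0) :
    ∀ x : (Fin (n - 1) → ℝ) × ℝ, x ≠ 0 → 0 ≤ x.2 → x.2 < 1 / 2 →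
      fderiv ℝ (fun p : (Fin (n - 1) → ℝ) × ℝ => q p.1 + p.2) x (A x) < 0 := by
  have Dg : ∀ x v, fderiv ℝ (fun p : (Fin (n - 1) → ℝ) × ℝ => q p.1 + p.2 ^ 2) x v
      = QuadraticMap.polar q x.1 v.1 + 2 * x.2 * v.2 := fun x v => by
    simp [fderiv_fst_add_snd_apply (q.differentiable _) (differentiable_pow 2 _),
      QuadraticMap.fderiv_apply]
  have Dh : ∀ x v, fderiv ℝ (fun p : (Fin (n - 1) → ℝ) × ℝ => q p.1 + p.2) x v
      = QuadraticMap.polar q x.1 v.1 + v.2 := fun x v => by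
    simp [fderiv_fst_add_snd_apply (ψ := fun z => z) (q.differentiable _) differentiableAt_id,
      QuadraticMap.fderiv_apply]
  set c := (A (0, 1)).2
  have hc : c < 0 := by
    have h := hneg (0, 1) (by simp)
    rw [Dg, QuadraticMap.polar_zero_left] at h
    linarith
  intro x hx hz hz'
  have hAx : (A x).2 = x.2 * c := A.snd_apply_eq_smul_of_snd_apply_inl hA x
  have hDg := hneg x hx
  rw [Dg, hAx] at hDg
  rw [Dh, hAx]
  linarith [mul_nonneg (mul_nonneg hz (neg_nonneg.mpr hc.le)) (by linarith : 0 ≤ 1 - 2 * x.2)]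

/-- The 'easy calculation' in the proof of the Proposition of Section 2.1:
if `g(y,z) = q(y) + z²` and `h(y,z) = q(y) + z` with `q` a nondegenerate
quadratic form on `ℝ^{n-1}`, and `A` is a linear endomorphism of `ℝ^{n-1} × ℝ`
whose `z`-component vanishes on `{z = 0}`, such that `x ↦ Dg(x)[Ax]` is negative
for all `x ≠ 0`, then `Dh(y,z)[A(y,z)] < 0` for all `(y,z) ≠ 0` with
`0 ≤ z < 1/2`. -/
theorem pseudo_gradient_easy_calculation (n : ℕ) (hn : 1 ≤ n)
    (q : QuadraticForm ℝ (Fin (n - 1) → ℝ))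
    (hq : LinearMap.BilinForm.Nondegenerate q.polarBilin)
    (A : ((Fin (n - 1) → ℝ) × ℝ) →ₗ[ℝ] ((Fin (n - 1) → ℝ) × ℝ))
    (hA : ∀ y : Fin (n - 1) → ℝ, (A (y, 0)).2 = 0)
    (hneg : ∀ x : (Fin (n - 1) → ℝ) × ℝ, x ≠ 0 →
      fderiv ℝ (fun p : (Fin (n - 1) → ℝ) × ℝ => q p.1 + p.2 ^ 2) x (A x) < 0) :
    ∀ x : (Fin (n - 1) → ℝ) × ℝ, x ≠ 0 → 0 ≤ x.2 → x.2 < 1 / 2 →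
      fderiv ℝ (fun p : (Fin (n - 1) → ℝ) × ℝ => q p.1 + p.2) x (A x) < 0 :=
  pseudo_gradient_easy_calculation_general n q A hA hneg
end

section
/- Let Q be a nondegenerate quadratic form on ℝ^n, and let X be a C¹ vector field defined on a neighborhood of 0 in ℝ^n with X(0) = 0, whose derivative A = DX(0) at 0 satisfies: x ↦ DQ(x)[Ax] is negative for all x ≠ 0. Then there exists δ > 0 such that DQ(x)[X(x)] < 0 for every x with 0 < |x| < δ. -/
/-!
On the unit sphere the continuous function `x ↦ DQ(x)[Ax]` attains a negative maximum `-c`, so by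
homogeneity `DQ(x)[Ax] ≤ -c‖x‖²`. Since `X x = A x + o(‖x‖)` and `DQ(x)` is bilinear in `x` and its
argument, `DQ(x)[X x]` differs from `DQ(x)[Ax]` by `o(‖x‖²)`, which the quadratic margin absorbs.
-/

open Asymptotics Filter Topology

theorem QuadraticMap.fderiv_apply_s6 {E : Type*} [NormedAddCommGroup E] [NormedSpace ℝ E]
    [FiniteDimensional ℝ E] (Q : QuadraticForm ℝ E) (x v : E) :
    fderiv ℝ (fun v => Q v) x v = polar Q x v := by
  set B := Q.polarBilin.toContinuousBilinearMap
  have hQ_half : (fun v => Q v) = fun v => (2 : ℝ)⁻¹ * B v v := by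
    funext v
    simp [B, QuadraticMap.polar_self]
  have hdiff : DifferentiableAt ℝ (fun v => Q v) x := by
    rw [hQ_half]; fun_prop
  rw [← hdiff.lineDeriv_eq_fderiv, QuadraticMap.lineDeriv]

theorem exists_pos_le_neg_mul_norm_sq_of_neg {E : Type*} [NormedAddCommGroup E]
    [NormedSpace ℝ E] [ProperSpace E] {f : E → ℝ} (hf : Continuous f)
    (hsmul : ∀ (t : ℝ) (x : E), f (t • x) = t ^ 2 * f x) (hneg : ∀ x ≠ 0, f x < 0) :
    ∃ c > 0, ∀ x, f x ≤ -(c * ‖x‖ ^ 2) := by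
  have hf0 : f 0 = 0 := by simpa using hsmul 0 0
  rcases subsingleton_or_nontrivial E with hE | hE
  · exact ⟨1, one_pos, fun x => by simp [Subsingleton.elim x 0, hf0]⟩
  obtain ⟨u, hu, hmax⟩ := (isCompact_sphere (0 : E) 1).exists_isMaxOn
    (NormedSpace.sphere_nonempty.mpr zero_le_one) hf.continuousOn
  have hu0 : u ≠ 0 := ne_zero_of_mem_unit_sphere ⟨u, hu⟩
  refine ⟨-f u, neg_pos.mpr (hneg u hu0), fun x => ?_⟩
  rcases eq_or_ne x 0 with rfl | hx
  · simp [hf0]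
  have hx' : ‖x‖ ≠ 0 := norm_ne_zero_iff.mpr hx
  have hxu : f (‖x‖⁻¹ • x) ≤ f u := hmax (by simp [norm_smul, hx'])
  calc f x = ‖x‖ ^ 2 * f (‖x‖⁻¹ • x) := by rw [hsmul]; field_simp
    _ ≤ ‖x‖ ^ 2 * f u := by gcongr
    _ = -(-f u * ‖x‖ ^ 2) := by ring

theorem eventually_apply_apply_neg_of_hasFDerivAt {E F : Type*} [NormedAddCommGroup E]
    [NormedSpace ℝ E] [ProperSpace E] [NormedAddCommGroup F] [NormedSpace ℝ F]
    (B : E →L[ℝ] F →L[ℝ] ℝ) {Y : E → F} {A : E →L[ℝ] F} (hY : HasFDerivAt Y A 0) (hY0 : Y 0 = 0)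
    (hneg : ∀ x ≠ 0, B x (A x) < 0) :
    ∀ᶠ x in 𝓝[≠] 0, B x (Y x) < 0 := by
  obtain ⟨c, hc, hcoer⟩ := exists_pos_le_neg_mul_norm_sq_of_neg
    (f := fun x => B x (A x)) (by fun_prop)
    (fun t x => by simp only [map_smul, smul_apply, smul_eq_mul]; ring) hneg
  have hlin : (fun x => Y x - A x) =o[𝓝 0] fun x => x := by
    simpa [hY0] using hasFDerivAt_iff_isLittleO_nhds_zero.mp hY
  have hrem : (fun x => B x (Y x - A x)) =o[𝓝 0] fun x => ‖x‖ ^ 2 := by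
    refine B.isBoundedBilinearMap.isBigO_comp.trans_isLittleO ?_
    simpa [sq] using (isBigO_refl (fun x : E => ‖x‖) _).mul_isLittleO hlin.norm_norm
  filter_upwards [self_mem_nhdsWithin, nhdsWithin_le_nhds (hrem.bound (half_pos hc))]
    with x hx hbound
  calc B x (Y x) = B x (A x) + B x (Y x - A x) := by rw [← map_add, add_sub_cancel]
    _ ≤ -(c * ‖x‖ ^ 2) + c / 2 * ‖x‖ ^ 2 := by
      gcongr
      · exact hcoer x
      · simpa using (le_abs_self _).trans hbound
    _ = -(c / 2 * ‖x‖ ^ 2) := by ring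
    _ < 0 := neg_neg_of_pos (by positivity)

theorem pseudo_gradient_near_interior_critical_point_general (n : ℕ)
    (Q : QuadraticForm ℝ (Fin n → ℝ))
    (X : (Fin n → ℝ) → (Fin n → ℝ))
    (hX : ContDiffAt ℝ 1 X 0) (hX0 : X 0 = 0)
    (hneg : ∀ x : Fin n → ℝ, x ≠ 0 →
      fderiv ℝ (fun v => Q v) x (fderiv ℝ X 0 x) < 0) :
    ∃ δ > 0, ∀ x : Fin n → ℝ, 0 < ‖x‖ → ‖x‖ < δ →
      fderiv ℝ (fun v => Q v) x (X x) < 0 := by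
  simp only [Q.fderiv_apply_s6] at hneg ⊢
  have hev : ∀ᶠ x in 𝓝[≠] 0, Q.polarBilin.toContinuousBilinearMap x (X x) < 0 :=
    eventually_apply_apply_neg_of_hasFDerivAt _
      (hX.differentiableAt one_ne_zero).hasFDerivAt hX0 hneg
  obtain ⟨δ, hδ, hball⟩ := Metric.eventually_nhds_iff.mp (eventually_nhdsWithin_iff.mp hev)
  exact ⟨δ, hδ, fun x hx hxδ =>
    hball (by rwa [dist_zero_right]) (norm_pos_iff.mp hx)⟩

/-- Condition 3) of an adapted pseudo-gradient is a pseudo-gradient condition: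
if `Q` is a nondegenerate quadratic form on `ℝ^n` and `X` is a `C¹` vector field
near `0` with `X(0) = 0` whose linearization `A = DX(0)` satisfies
`DQ(x)[Ax] < 0` for all `x ≠ 0`, then `DQ(x)[X(x)] < 0` for all `x ≠ 0` close
enough to `0`. -/
theorem pseudo_gradient_near_interior_critical_point (n : ℕ)
    (Q : QuadraticForm ℝ (Fin n → ℝ))
    (hQ : LinearMap.BilinForm.Nondegenerate Q.polarBilin)
    (X : (Fin n → ℝ) → (Fin n → ℝ))
    (hX : ContDiffAt ℝ 1 X 0) (hX0 : X 0 = 0)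
    (hneg : ∀ x : Fin n → ℝ, x ≠ 0 →
      fderiv ℝ (fun v => Q v) x (fderiv ℝ X 0 x) < 0) :
    ∃ δ > 0, ∀ x : Fin n → ℝ, 0 < ‖x‖ → ‖x‖ < δ →
      fderiv ℝ (fun v => Q v) x (X x) < 0 :=
  pseudo_gradient_near_interior_critical_point_general n Q X hX hX0 hneg
end

section
/- Let n ≥ 1, let q be a nondegenerate quadratic form on ℝ^{n-1}, and let f(y,z) = z + q(y) on ℝ^{n-1} × ℝ. Let X be a C¹ vector field defined on a neighborhood of 0 in ℝ^{n-1} × ℝ such that X(0) = 0, the z-component of X(y,0) vanishes for all y (X is tangent to the boundary {z = 0}), and the linearization A = DX(0) satisfies: x ↦ D(q(y)+z²)(x)[Ax] is negative for all x ≠ 0. Then there exists δ > 0 such that for every (y,z) ≠ (0,0) with |(y,z)| < δ and z ≥ 0, one has Df(y,z)[X(y,z)] < 0. -/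
/-!
Write `x = (y, z)`, `A = DX(0)` and `B` for the polar form of `q`, so that
`Df(x)[v] = v_z + B(y, v_y)`. Testing the hypothesis on `(0, 1)` gives `c := (A(0,1))_z < 0`,
and on `(y, 0)` shows that `y ↦ B(y, (A(y,0))_y)` is negative definite, hence at most
`-λ‖y‖²` by compactness of the unit sphere. Since `X_z` vanishes on `{z = 0}` and `X` is `C¹`,
`X_z(y, z) ≤ c z / 2` near `0`, while `B(y, X_y) ≤ -λ‖y‖² + O(‖y‖ z) + o(‖y‖ ‖x‖)`.
For `z ≥ 0` the cross terms are absorbed, leaving `Df(x)[X x] ≤ c z / 4 - λ‖y‖² / 2 < 0`.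
-/

open Filter Topology

namespace QuadraticMap

variable {E F : Type*} [NormedAddCommGroup E] [NormedSpace ℝ E] [FiniteDimensional ℝ E]
  [NormedAddCommGroup F] [NormedSpace ℝ F]

noncomputable def polarCLM (q : QuadraticMap ℝ E F) : E →L[ℝ] E →L[ℝ] F :=
  LinearMap.toContinuousLinearMap (LinearMap.toContinuousLinearMap.toLinearMap ∘ₗ q.polarBilin)

@[simp]
theorem polarCLM_apply (q : QuadraticMap ℝ E F) (a b : E) : q.polarCLM a b = polar q a b := by
  simp [polarCLM]

theorem hasFDerivAt (q : QuadraticMap ℝ E F) (y : E) : HasFDerivAt q (q.polarCLM y) y := by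
  have hd : DifferentiableAt ℝ q y := by
    have : ⇑q = fun x => (2 : ℝ)⁻¹ • q.polarCLM x x := by
      ext x
      rw [polarCLM_apply, polar_self, two_nsmul, ← two_smul ℝ, smul_smul]
      norm_num
    rw [this]; fun_prop
  refine hd.hasFDerivAt.congr_fderiv ?_
  ext v
  rw [← hd.lineDeriv_eq_fderiv, q.lineDeriv, polarCLM_apply]

end QuadraticMap

section

variable {E : Type*} [NormedAddCommGroup E] [NormedSpace ℝ E] [FiniteDimensional ℝ E]

theorem fderiv_snd_add_quadraticMap_fst_apply (q : QuadraticMap ℝ E ℝ) (x v : E × ℝ) :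
    fderiv ℝ (fun p : E × ℝ => p.2 + q p.1) x v = v.2 + QuadraticMap.polar q x.1 v.1 := by
  have : HasFDerivAt (fun p : E × ℝ => p.2 + q p.1) _ x :=
    hasFDerivAt_snd.add ((q.hasFDerivAt x.1).comp x hasFDerivAt_fst)
  rw [this.fderiv]
  simp

theorem fderiv_quadraticMap_fst_add_snd_sq_apply (q : QuadraticMap ℝ E ℝ) (x v : E × ℝ) :
    fderiv ℝ (fun p : E × ℝ => q p.1 + p.2 ^ 2) x v =
      QuadraticMap.polar q x.1 v.1 + 2 * x.2 * v.2 := by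
  have : HasFDerivAt (fun p : E × ℝ => q p.1 + p.2 ^ 2) _ x :=
    ((q.hasFDerivAt x.1).comp x hasFDerivAt_fst).add (hasFDerivAt_snd.pow 2)
  rw [this.fderiv]
  simp

end

theorem exists_pos_mul_norm_sq_le {E : Type*} [NormedAddCommGroup E] [NormedSpace ℝ E]
    [ProperSpace E] {h : E → ℝ} (hcont : Continuous h)
    (hhom : ∀ (t : ℝ) (x : E), h (t • x) = t ^ 2 * h x) (hpos : ∀ x ≠ 0, 0 < h x) :
    ∃ c > 0, ∀ x, c * ‖x‖ ^ 2 ≤ h x := by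
  rcases subsingleton_or_nontrivial E with hE | hE
  · refine ⟨1, one_pos, fun x => ?_⟩
    simpa [Subsingleton.elim x 0] using (hhom 0 0).ge
  obtain ⟨u, hu, hmin⟩ := (isCompact_sphere (0 : E) 1).exists_isMinOn
    (NormedSpace.sphere_nonempty.2 zero_le_one) hcont.continuousOn
  have hu0 : u ≠ 0 := ne_zero_of_mem_unit_sphere ⟨u, hu⟩
  refine ⟨h u, hpos u hu0, fun x => ?_⟩
  rcases eq_or_ne x 0 with rfl | hx
  · simpa using (hhom 0 0).ge
  have hxn : ‖x‖ ≠ 0 := norm_ne_zero_iff.2 hx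
  calc h u * ‖x‖ ^ 2 ≤ h (‖x‖⁻¹ • x) * ‖x‖ ^ 2 := by
        gcongr
        exact hmin (by simp [norm_smul, hxn])
    _ = h x := by rw [hhom]; field_simp

variable {Y : Type*} [NormedAddCommGroup Y] [NormedSpace ℝ Y]

/-- Strict differentiability makes the estimate uniform in the boundary coordinate `y`. -/
theorem HasStrictFDerivAt.eventually_abs_sub_snd_mul_le {φ : Y × ℝ → ℝ} {L : Y × ℝ →L[ℝ] ℝ}
    (hφ : HasStrictFDerivAt φ L 0) (hbdry : ∀ y, φ (y, 0) = 0) {ε : ℝ} (hε : 0 < ε) :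
    ∀ᶠ x in 𝓝 0, |φ x - x.2 * L (0, 1)| ≤ ε * |x.2| := by
  have hpair : Tendsto (fun x : Y × ℝ => (x, (x.1, (0 : ℝ)))) (𝓝 0) (𝓝 (0, 0)) :=
    (by fun_prop : Continuous fun x : Y × ℝ => (x, (x.1, (0 : ℝ)))).tendsto' _ _ rfl
  filter_upwards [hpair.eventually (hφ.isLittleO.def hε)] with ⟨y, z⟩ hx
  have hL : L (0, z) = z * L (0, 1) := by
    rw [← smul_eq_mul, ← map_smul, Prod.smul_mk, smul_zero, smul_eq_mul, mul_one]
  simpa [hbdry, hL] using hx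

theorem apply_fst_le_of_norm_sub_le (B : Y →L[ℝ] Y →L[ℝ] ℝ) (A : Y × ℝ →L[ℝ] Y × ℝ) {lam : ℝ}
    (hB : ∀ y, B y (A (y, 0)).1 ≤ -lam * ‖y‖ ^ 2) {y : Y} {z ε : ℝ} {v : Y × ℝ} (hz : 0 ≤ z)
    (hv : ‖v - A (y, z)‖ ≤ ε * ‖(y, z)‖) :
    B y v.1 ≤ -lam * ‖y‖ ^ 2 + ‖B‖ * ‖y‖ * (‖A‖ * z + ε * ‖(y, z)‖) := by
  set w := (A (0, z) + (v - A (y, z))).1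
  have hv₁ : v.1 = (A (y, 0)).1 + w := by
    have : A (y, z) = A (y, 0) + A (0, z) := by rw [← map_add, Prod.mk_add_mk, add_zero, zero_add]
    simp only [w, this, Prod.fst_add, Prod.fst_sub]
    abel
  have hw : ‖w‖ ≤ ‖A‖ * z + ε * ‖(y, z)‖ := by
    have hAz : ‖A (0, z)‖ ≤ ‖A‖ * z := by
      have h0z : ‖((0 : Y), z)‖ = z := by simp [Prod.norm_def, hz]
      simpa only [h0z] using A.le_opNorm (0, z)
    exact (norm_fst_le _).trans ((norm_add_le _ _).trans (add_le_add hAz hv))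
  calc B y v.1 = B y (A (y, 0)).1 + B y w := by rw [hv₁, map_add]
    _ ≤ -lam * ‖y‖ ^ 2 + ‖B‖ * ‖y‖ * ‖w‖ :=
      add_le_add (hB y) ((le_abs_self _).trans (B.le_opNorm₂ y w))
    _ ≤ _ := by gcongr

theorem eventually_snd_add_apply_fst_lt_zero {B : Y →L[ℝ] Y →L[ℝ] ℝ} {X : Y × ℝ → Y × ℝ}
    {A : Y × ℝ →L[ℝ] Y × ℝ} (hA : HasStrictFDerivAt X A 0) (hX0 : X 0 = 0)
    (htangent : ∀ y, (X (y, 0)).2 = 0) (hc : (A (0, 1)).2 < 0) {lam : ℝ} (hlam : 0 < lam)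
    (hB : ∀ y, B y (A (y, 0)).1 ≤ -lam * ‖y‖ ^ 2) :
    ∀ᶠ x in 𝓝 0, x ≠ 0 → 0 ≤ x.2 → (X x).2 + B x.1 (X x).1 < 0 := by
  set c := (A (0, 1)).2
  set ε := lam / (2 * (‖B‖ + 1))
  have hε : 0 < ε := by positivity
  have hBε : ‖B‖ * ε ≤ lam / 2 := by
    rw [mul_div_assoc', div_le_div_iff₀ (by positivity) two_pos]
    nlinarith [norm_nonneg B]
  have h_snd : ∀ᶠ x in 𝓝 0, |(X x).2 - x.2 * c| ≤ -c / 2 * |x.2| := by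
    simpa using hA.snd.eventually_abs_sub_snd_mul_le htangent (ε := -c / 2) (by linarith)
  have h_lin : ∀ᶠ x in 𝓝 0, ‖X x - A x‖ ≤ ε * ‖x‖ := by
    simpa [hX0] using hA.hasFDerivAt.isLittleO.def hε
  have h_small : ∀ᶠ x in 𝓝 (0 : Y × ℝ), ‖B‖ * (‖A‖ + ε) * ‖x.1‖ < -c / 4 :=
    Tendsto.eventually_lt_const (by linarith)
      ((by fun_prop : Continuous fun x : Y × ℝ => ‖B‖ * (‖A‖ + ε) * ‖x.1‖).tendsto' 0 0 (by simp))
  filter_upwards [h_snd, h_lin, h_small] with ⟨y, z⟩ h₁ h₂ h₃ hx hz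
  have hX₂ : (X (y, z)).2 ≤ c / 2 * z := by
    have := (abs_le.1 h₁).2
    simp only [abs_of_nonneg hz] at this
    linarith
  have hX₁ := apply_fst_le_of_norm_sub_le B A hB hz h₂
  have hyz : ‖(y, z)‖ ≤ ‖y‖ + z := by
    rw [Prod.norm_def, Real.norm_of_nonneg hz]
    exact max_le (by linarith) (by linarith [norm_nonneg y])
  have hnB := norm_nonneg B
  have hny := norm_nonneg y
  have key : (X (y, z)).2 + B y (X (y, z)).1 ≤ c / 4 * z - lam / 2 * ‖y‖ ^ 2 := by
    have e₁ : ‖B‖ * ‖y‖ * (ε * ‖(y, z)‖) ≤ ‖B‖ * ‖y‖ * (ε * (‖y‖ + z)) := by gcongr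
    have e₂ : ‖B‖ * (‖A‖ + ε) * ‖y‖ * z ≤ -c / 4 * z := by gcongr
    have e₃ : ‖B‖ * ε * ‖y‖ ^ 2 ≤ lam / 2 * ‖y‖ ^ 2 := by gcongr
    nlinarith
  rcases hz.lt_or_eq with hz | rfl
  · nlinarith
  · have hy : 0 < ‖y‖ := norm_pos_iff.2 fun hy => hx (by rw [hy]; rfl)
    nlinarith [mul_pos hlam (pow_pos hy 2)]

theorem pseudo_gradient_near_boundary_critical_point_general (n : ℕ)
    (q : QuadraticForm ℝ (Fin (n - 1) → ℝ))
    (X : ((Fin (n - 1) → ℝ) × ℝ) → ((Fin (n - 1) → ℝ) × ℝ))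
    (hX : ContDiffAt ℝ 1 X 0) (hX0 : X 0 = 0)
    (htangent : ∀ y : Fin (n - 1) → ℝ, (X (y, 0)).2 = 0)
    (hneg : ∀ x : (Fin (n - 1) → ℝ) × ℝ, x ≠ 0 →
      fderiv ℝ (fun p : (Fin (n - 1) → ℝ) × ℝ => q p.1 + p.2 ^ 2) x (fderiv ℝ X 0 x) < 0) :
    ∃ δ > 0, ∀ x : (Fin (n - 1) → ℝ) × ℝ, x ≠ 0 → ‖x‖ < δ → 0 ≤ x.2 →
      fderiv ℝ (fun p : (Fin (n - 1) → ℝ) × ℝ => p.2 + q p.1) x (X x) < 0 := by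
  set A := fderiv ℝ X 0
  simp only [fderiv_quadraticMap_fst_add_snd_sq_apply] at hneg
  have hc : (A (0, 1)).2 < 0 := by
    have h := hneg (0, 1) (by simp)
    simp at h
    linarith
  have hhom (t : ℝ) (y : Fin (n - 1) → ℝ) :
      -q.polarCLM (t • y) (A (t • y, 0)).1 = t ^ 2 * -q.polarCLM y (A (y, 0)).1 := by
    have hty : ((t • y, 0) : (Fin (n - 1) → ℝ) × ℝ) = t • (y, 0) := by simp
    simp only [hty, map_smul, Prod.smul_fst, smul_apply, smul_eq_mul]
    ring
  obtain ⟨lam, hlam, hB⟩ := exists_pos_mul_norm_sq_le (h := fun y => -q.polarCLM y (A (y, 0)).1)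
    (by fun_prop) hhom
    fun y hy => by simpa using hneg (y, 0) (by simpa using hy)
  obtain ⟨δ, hδ, hX⟩ := Metric.eventually_nhds_iff.1 <|
    eventually_snd_add_apply_fst_lt_zero (hX.hasStrictFDerivAt one_ne_zero) hX0 htangent hc hlam
      fun y => by linarith [hB y]
  refine ⟨δ, hδ, fun x hx hxδ hz => ?_⟩
  rw [fderiv_snd_add_quadraticMap_fst_apply]
  simpa using hX (by simpa using hxδ) hx hz

/-- Conclusion of the Proposition of Section 2.1 near a type N boundary critical
point: in the normal form `f(y,z) = z + q(y)` on `M = {z ≥ 0}`, a `C¹` vector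
field `X` vanishing at `0`, tangent to the boundary `{z = 0}`, whose
linearization `A = DX(0)` makes `x ↦ D(q(y)+z²)(x)[Ax]` negative for `x ≠ 0`,
is a pseudo-gradient for `f` near `0`: `Df(x)[X(x)] < 0` for `x ≠ 0` near `0`
with `z ≥ 0`. -/
theorem pseudo_gradient_near_boundary_critical_point (n : ℕ) (hn : 1 ≤ n)
    (q : QuadraticForm ℝ (Fin (n - 1) → ℝ))
    (hq : LinearMap.BilinForm.Nondegenerate q.polarBilin)
    (X : ((Fin (n - 1) → ℝ) × ℝ) → ((Fin (n - 1) → ℝ) × ℝ))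
    (hX : ContDiffAt ℝ 1 X 0) (hX0 : X 0 = 0)
    (htangent : ∀ y : Fin (n - 1) → ℝ, (X (y, 0)).2 = 0)
    (hneg : ∀ x : (Fin (n - 1) → ℝ) × ℝ, x ≠ 0 →
      fderiv ℝ (fun p : (Fin (n - 1) → ℝ) × ℝ => q p.1 + p.2 ^ 2) x (fderiv ℝ X 0 x) < 0) :
    ∃ δ > 0, ∀ x : (Fin (n - 1) → ℝ) × ℝ, x ≠ 0 → ‖x‖ < δ → 0 ≤ x.2 →
      fderiv ℝ (fun p : (Fin (n - 1) → ℝ) × ℝ => p.2 + q p.1) x (X x) < 0 :=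
  pseudo_gradient_near_boundary_critical_point_general n q X hX hX0 htangent hneg
end

section
/- Let E be a finite-dimensional real vector space, Q a quadratic form on E, and A a linear endomorphism of E such that x ↦ DQ(x)[Ax] is negative for every x ≠ 0. Then Q is nondegenerate, and A is hyperbolic: no eigenvalue of the complexification of A has zero real part. -/
/-!
Write `B` for the polar form of `Q`. A vector `x ≠ 0` pairs nontrivially with `A x`, so `B` has
trivial kernel. If `i β` were an eigenvalue of the complexification with eigenvector `x + i y`,
then `A x = -β y` and `A y = β x`, so by symmetry of `B`
`B(x, A x) + B(y, A y) = -β B(x, y) + β B(y, x) = 0`, while the left side is negative because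
`x` and `y` are not both zero.
-/

open TensorProduct

namespace LinearMap

theorem IsRefl.nondegenerate_of_apply_ne_zero {R M M₁ : Type*} [CommRing R] [AddCommGroup M]
    [Module R M] [AddCommGroup M₁] [Module R M₁] {B : M →ₗ[R] M →ₗ[R] M₁} (hB : B.IsRefl)
    (f : M → M) (hf : ∀ x ≠ 0, B x (f x) ≠ 0) : B.Nondegenerate :=
  hB.nondegenerate_iff_separatingLeft.mpr fun x hx => by_contra fun h => hf x h (hx (f x))

end LinearMap

theorem QuadraticMap.isSymm_polarBilin {R M : Type*} [CommRing R] [AddCommGroup M] [Module R M]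
    (Q : QuadraticForm R M) : Q.polarBilin.IsSymm :=
  ⟨QuadraticMap.polar_comm Q⟩

namespace TensorProduct

variable {E F : Type*} [AddCommGroup E] [Module ℝ E] [AddCommGroup F] [Module ℝ F]

variable (E) in
noncomputable def complexRe : ℂ ⊗[ℝ] E →ₗ[ℝ] E :=
  lift ((LinearMap.lsmul ℝ E).comp Complex.reLm)

variable (E) in
noncomputable def complexIm : ℂ ⊗[ℝ] E →ₗ[ℝ] E :=
  lift ((LinearMap.lsmul ℝ E).comp Complex.imLm)

@[simp]
theorem complexRe_tmul (c : ℂ) (x : E) : complexRe E (c ⊗ₜ x) = c.re • x := rfl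

@[simp]
theorem complexIm_tmul (c : ℂ) (x : E) : complexIm E (c ⊗ₜ x) = c.im • x := rfl

theorem one_tmul_complexRe_add_I_tmul_complexIm (z : ℂ ⊗[ℝ] E) :
    (1 : ℂ) ⊗ₜ complexRe E z + Complex.I ⊗ₜ complexIm E z = z := by
  induction z using TensorProduct.induction_on with
  | zero => simp
  | tmul c x =>
    rw [complexRe_tmul, complexIm_tmul, tmul_smul, tmul_smul, smul_tmul', smul_tmul',
      ← add_tmul]
    congr 1
    simp
  | add a b ha hb => rw [map_add, map_add, tmul_add, tmul_add, add_add_add_comm, ha, hb]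

theorem eq_zero_iff_complexRe_eq_zero_and_complexIm_eq_zero (z : ℂ ⊗[ℝ] E) :
    z = 0 ↔ complexRe E z = 0 ∧ complexIm E z = 0 := by
  refine ⟨fun hz => by simp [hz], fun ⟨hre, him⟩ => ?_⟩
  rw [← one_tmul_complexRe_add_I_tmul_complexIm z, hre, him, tmul_zero, tmul_zero, add_zero]

theorem complexRe_baseChange (A : E →ₗ[ℝ] F) (z : ℂ ⊗[ℝ] E) :
    complexRe F (A.baseChange ℂ z) = A (complexRe E z) := by
  induction z using TensorProduct.induction_on with
  | zero => simp
  | tmul c x => simp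
  | add a b ha hb => simp [ha, hb]

theorem complexIm_baseChange (A : E →ₗ[ℝ] F) (z : ℂ ⊗[ℝ] E) :
    complexIm F (A.baseChange ℂ z) = A (complexIm E z) := by
  induction z using TensorProduct.induction_on with
  | zero => simp
  | tmul c x => simp
  | add a b ha hb => simp [ha, hb]

theorem complexRe_smul (μ : ℂ) (z : ℂ ⊗[ℝ] E) :
    complexRe E (μ • z) = μ.re • complexRe E z - μ.im • complexIm E z := by
  induction z using TensorProduct.induction_on with
  | zero => simp
  | tmul c x =>
    rw [smul_tmul', complexRe_tmul, complexRe_tmul, complexIm_tmul, smul_eq_mul, Complex.mul_re,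
      sub_smul, smul_smul, smul_smul]
  | add a b ha hb => rw [smul_add, map_add, ha, hb, map_add, map_add, smul_add, smul_add]; abel

theorem complexIm_smul (μ : ℂ) (z : ℂ ⊗[ℝ] E) :
    complexIm E (μ • z) = μ.re • complexIm E z + μ.im • complexRe E z := by
  induction z using TensorProduct.induction_on with
  | zero => simp
  | tmul c x =>
    rw [smul_tmul', complexIm_tmul, complexIm_tmul, complexRe_tmul, smul_eq_mul, Complex.mul_im,
      add_smul, smul_smul, smul_smul, add_comm]
  | add a b ha hb => rw [smul_add, map_add, ha, hb, map_add, map_add, smul_add, smul_add]; abel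

end TensorProduct

theorem LinearMap.re_ne_zero_of_hasEigenvalue_baseChange {E : Type*} [AddCommGroup E]
    [Module ℝ E] {B : LinearMap.BilinForm ℝ E} (hB : LinearMap.IsSymm B) {A : E →ₗ[ℝ] E}
    (hneg : ∀ x ≠ 0, B x (A x) < 0) {μ : ℂ} (hμ : Module.End.HasEigenvalue (A.baseChange ℂ) μ) :
    μ.re ≠ 0 := by
  intro hre
  obtain ⟨z, hz⟩ := hμ.exists_hasEigenvector
  set x := complexRe E z
  set y := complexIm E z
  have hAx : A x = -μ.im • y := by
    rw [← complexRe_baseChange, hz.apply_eq_smul, complexRe_smul, hre, zero_smul, zero_sub,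
      neg_smul]
  have hAy : A y = μ.im • x := by
    rw [← complexIm_baseChange, hz.apply_eq_smul, complexIm_smul, hre, zero_smul, zero_add]
  have hsum : B x (A x) + B y (A y) = 0 := by
    rw [hAx, hAy, map_smul, map_smul, smul_eq_mul, smul_eq_mul, ← hB.eq y x]
    simp only [RingHom.id_apply]
    ring
  have hxy : x ≠ 0 ∨ y ≠ 0 := by
    rw [← not_and_or, ← eq_zero_iff_complexRe_eq_zero_and_complexIm_eq_zero]
    exact hz.2
  have hle : ∀ v, B v (A v) ≤ 0 := fun v => by
    rcases eq_or_ne v 0 with rfl | hv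
    · simp
    · exact (hneg v hv).le
  refine (?_ : B x (A x) + B y (A y) < 0).ne hsum
  rcases hxy with hx | hy
  · exact add_neg_of_neg_of_nonpos (hneg x hx) (hle y)
  · exact add_neg_of_nonpos_of_neg (hle x) (hneg y hy)

theorem pseudo_gradient_linear_hyperbolic_general (E : Type*) [AddCommGroup E] [Module ℝ E]
    (Q : QuadraticForm ℝ E) (A : E →ₗ[ℝ] E)
    (hneg : ∀ x : E, x ≠ 0 → Q.polarBilin x (A x) < 0) :
    LinearMap.BilinForm.Nondegenerate Q.polarBilin ∧
      ∀ μ : ℂ, Module.End.HasEigenvalue (LinearMap.baseChange ℂ A) μ → μ.re ≠ 0 :=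
  ⟨Q.isSymm_polarBilin.isRefl.nondegenerate_of_apply_ne_zero A fun x hx => (hneg x hx).ne,
    fun _ => LinearMap.re_ne_zero_of_hasEigenvalue_baseChange Q.isSymm_polarBilin hneg⟩

/-- Hyperbolicity implicit in conditions 3) and 4) of Section 2.1: if `Q` is a
quadratic form on a finite-dimensional real vector space and `A` is a linear
endomorphism with `DQ(x)[Ax] < 0` for every `x ≠ 0` (where
`DQ(x)[v] = polar Q (x,v)`), then `Q` is nondegenerate and `A` is hyperbolic:
no eigenvalue of the complexification of `A` has zero real part. -/
theorem pseudo_gradient_linear_hyperbolic (E : Type*) [AddCommGroup E] [Module ℝ E]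
    [FiniteDimensional ℝ E] (Q : QuadraticForm ℝ E) (A : E →ₗ[ℝ] E)
    (hneg : ∀ x : E, x ≠ 0 → Q.polarBilin x (A x) < 0) :
    LinearMap.BilinForm.Nondegenerate Q.polarBilin ∧
      ∀ μ : ℂ, Module.End.HasEigenvalue (LinearMap.baseChange ℂ A) μ → μ.re ≠ 0 :=
  pseudo_gradient_linear_hyperbolic_general E Q A hneg
end
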